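/- If W : ℝ^d → ℝ is differentiable and ∇W is Lipschitz continuous with constant L ≥ 0, then for all x, y ∈ ℝ^d, ‖∇W(x) − ∇W(y)‖ ≤ (2L/φ(R₀)) f(‖x − y‖); in particular, if 2L/φ(R₀) < c, then W satisfies the interaction assumption ‖∇W(x) − ∇W(y)‖ ≤ η f(‖x − y‖) for some η ∈ (0, c). -/
import Mathlib


open MeasureTheory Real Set
open scoped RealInnerProductSpace

/-- `φ(r) = exp(−(1/4) ∫₀^r s κ₋(s) ds)` where `κ₋ = max(0, −κ)`. -/
noncomputable def phiF (κ : ℝ → ℝ) (r : ℝ) : ℝ :=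
  Real.exp (-(1 / 4) * ∫ s in (0:ℝ)..r, s * max 0 (-κ s))

/-- `Φ(r) = ∫₀^r φ(s) ds`. -/
noncomputable def PhiF (κ : ℝ → ℝ) (r : ℝ) : ℝ := ∫ s in (0:ℝ)..r, phiF κ s

/-- `R₀ = inf {s ≥ 0 : κ(r) ≥ 0 for all r ≥ s}`. -/
noncomputable def R0 (κ : ℝ → ℝ) : ℝ := sInf {s : ℝ | 0 ≤ s ∧ ∀ r, s ≤ r → 0 ≤ κ r}

/-- `R₁ = inf {s ≥ R₀ : s(s − R₀)κ(r) ≥ 8 for all r ≥ s}`. -/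
noncomputable def R1 (κ : ℝ → ℝ) : ℝ :=
  sInf {s : ℝ | R0 κ ≤ s ∧ ∀ r, s ≤ r → 8 ≤ s * (s - R0 κ) * κ r}

/-- `c = (∫₀^{R₁} Φ(s) φ(s)⁻¹ ds)⁻¹`. -/
noncomputable def cF (κ : ℝ → ℝ) : ℝ := (∫ s in (0:ℝ)..R1 κ, PhiF κ s / phiF κ s)⁻¹

/-- `g(r) = 1 − (c/2) ∫₀^{min(r,R₁)} Φ(s) φ(s)⁻¹ ds`. -/
noncomputable def gF (κ : ℝ → ℝ) (r : ℝ) : ℝ :=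
  1 - cF κ / 2 * ∫ s in (0:ℝ)..min r (R1 κ), PhiF κ s / phiF κ s

/-- `f(r) = ∫₀^r φ(s) g(s) ds`. -/
noncomputable def fF (κ : ℝ → ℝ) (r : ℝ) : ℝ := ∫ s in (0:ℝ)..r, phiF κ s * gF κ s

section helpers
variable {κ : ℝ → ℝ}

lemma phiF_pos (κ : ℝ → ℝ) (r : ℝ) : 0 < phiF κ r := Real.exp_pos _

lemma R0_set_nonempty (hκliminf : ∃ ε > (0:ℝ), ∃ R : ℝ, ∀ r ≥ R, ε ≤ κ r) :
    {s : ℝ | 0 ≤ s ∧ ∀ r, s ≤ r → 0 ≤ κ r}.Nonempty := by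
  obtain ⟨ε, hε, R, hR⟩ := hκliminf
  exact ⟨max R 0, le_max_right _ _,
    fun r hr => le_trans hε.le (hR r (le_trans (le_max_left _ _) hr))⟩

lemma R0_nonneg (hκliminf : ∃ ε > (0:ℝ), ∃ R : ℝ, ∀ r ≥ R, ε ≤ κ r) : 0 ≤ R0 κ :=
  le_csInf (R0_set_nonempty hκliminf) fun _ hs => hs.1

lemma kappa_nonneg (hκliminf : ∃ ε > (0:ℝ), ∃ R : ℝ, ∀ r ≥ R, ε ≤ κ r)
    {t : ℝ} (ht : R0 κ < t) : 0 ≤ κ t := by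
  obtain ⟨s, hs, hst⟩ := (csInf_lt_iff ⟨0, fun x hx => hx.1⟩ (R0_set_nonempty hκliminf)).mp ht
  exact hs.2 t hst.le

lemma kneg_intble (hκcont : ContinuousOn κ (Set.Ici 0)) {a b : ℝ} (ha : 0 ≤ a) (hb : 0 ≤ b) :
    IntervalIntegrable (fun s => s * max 0 (-κ s)) volume a b := by
  have hsub : Set.uIcc a b ⊆ Set.Ici 0 := fun x hx => le_trans (le_min ha hb) hx.1
  exact (continuousOn_id.mul (continuousOn_const.sup (hκcont.mono hsub).neg)).intervalIntegrable

lemma phiF_ge_R0 (hκcont : ContinuousOn κ (Set.Ici 0))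
    (hκliminf : ∃ ε > (0:ℝ), ∃ R : ℝ, ∀ r ≥ R, ε ≤ κ r)
    {s : ℝ} (hs : 0 ≤ s) : phiF κ (R0 κ) ≤ phiF κ s := by
  have hR0 := R0_nonneg (κ := κ) hκliminf
  unfold phiF
  rw [Real.exp_le_exp]
  have key : (∫ t in (0:ℝ)..s, t * max 0 (-κ t)) ≤ ∫ t in (0:ℝ)..(R0 κ), t * max 0 (-κ t) := by
    rcases le_total s (R0 κ) with h | h
    · have hadd := intervalIntegral.integral_add_adjacent_intervals
        (kneg_intble hκcont le_rfl hs) (kneg_intble hκcont hs hR0)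
      rw [← hadd]
      have : 0 ≤ ∫ t in s..(R0 κ), t * max 0 (-κ t) :=
        intervalIntegral.integral_nonneg h
          (fun u hu => mul_nonneg (hs.trans hu.1) (le_max_left _ _))
      linarith
    · have hadd := intervalIntegral.integral_add_adjacent_intervals
        (kneg_intble hκcont le_rfl hR0) (kneg_intble hκcont hR0 hs)
      rw [← hadd]
      have hz : (∫ t in (R0 κ)..s, t * max 0 (-κ t)) = 0 := by
        rw [intervalIntegral.integral_congr_ae
          (g := fun _ => (0:ℝ)) (Filter.Eventually.of_forall fun x hx => ?_)]
        · simp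
        · rw [Set.uIoc_of_le h] at hx
          have : 0 ≤ κ x := kappa_nonneg hκliminf hx.1
          simp [max_eq_left, neg_nonpos.mpr this, max_eq_left (neg_nonpos.mpr this)]
      linarith
  nlinarith

lemma phiF_contOn (hκcont : ContinuousOn κ (Set.Ici 0)) {b : ℝ} (hb : 0 ≤ b) :
    ContinuousOn (phiF κ) (Set.Icc 0 b) := by
  have h1 : ContinuousOn (fun r => ∫ s in (0:ℝ)..r, s * max 0 (-κ s)) (Set.Icc 0 b) := by
    have := intervalIntegral.continuousOn_primitive_interval'
      (kneg_intble hκcont le_rfl hb) (a := 0) left_mem_uIcc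
    rwa [Set.uIcc_of_le hb] at this
  exact Real.continuous_exp.comp_continuousOn (continuousOn_const.mul h1)

lemma phiF_intble (hκcont : ContinuousOn κ (Set.Ici 0)) {b : ℝ} (hb : 0 ≤ b) :
    IntervalIntegrable (phiF κ) volume 0 b := by
  have := (phiF_contOn hκcont hb)
  rw [← Set.uIcc_of_le hb] at this
  exact this.intervalIntegrable

lemma PhiF_nonneg (hκcont : ContinuousOn κ (Set.Ici 0)) {s : ℝ} (hs : 0 ≤ s) :
    0 ≤ PhiF κ s :=
  intervalIntegral.integral_nonneg hs (fun u _ => (phiF_pos κ u).le)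

lemma PhiF_pos (hκcont : ContinuousOn κ (Set.Ici 0)) {s : ℝ} (hs : 0 < s) :
    0 < PhiF κ s :=
  intervalIntegral.intervalIntegral_pos_of_pos_on (phiF_intble hκcont hs.le)
    (fun x _ => phiF_pos κ x) hs

lemma PhiF_contOn (hκcont : ContinuousOn κ (Set.Ici 0)) {b : ℝ} (hb : 0 ≤ b) :
    ContinuousOn (PhiF κ) (Set.Icc 0 b) := by
  have := intervalIntegral.continuousOn_primitive_interval'
    (phiF_intble hκcont hb) (a := 0) left_mem_uIcc
  rwa [Set.uIcc_of_le hb] at this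

lemma q_contOn (hκcont : ContinuousOn κ (Set.Ici 0)) {b : ℝ} (hb : 0 ≤ b) :
    ContinuousOn (fun s => PhiF κ s / phiF κ s) (Set.Icc 0 b) :=
  (PhiF_contOn hκcont hb).div (phiF_contOn hκcont hb) (fun x _ => (phiF_pos κ x).ne')

lemma q_intble (hκcont : ContinuousOn κ (Set.Ici 0)) {a b : ℝ} (ha : 0 ≤ a) (hab : a ≤ b) :
    IntervalIntegrable (fun s => PhiF κ s / phiF κ s) volume a b := by
  have := (q_contOn hκcont (ha.trans hab)).mono
    (Set.Icc_subset_Icc ha le_rfl : Set.Icc a b ⊆ Set.Icc 0 b)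
  rw [← Set.uIcc_of_le hab] at this
  exact this.intervalIntegrable

lemma I_R1_pos (hκcont : ContinuousOn κ (Set.Ici 0)) (hR1 : 0 < R1 κ) :
    0 < ∫ s in (0:ℝ)..R1 κ, PhiF κ s / phiF κ s :=
  intervalIntegral.intervalIntegral_pos_of_pos_on (q_intble hκcont le_rfl hR1.le)
    (fun x hx => div_pos (PhiF_pos hκcont hx.1) (phiF_pos κ x)) hR1

lemma cF_pos (hκcont : ContinuousOn κ (Set.Ici 0)) (hR1 : 0 < R1 κ) : 0 < cF κ :=
  inv_pos.mpr (I_R1_pos hκcont hR1)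

lemma gF_ge_half (hκcont : ContinuousOn κ (Set.Ici 0)) (hR1 : 0 < R1 κ)
    {s : ℝ} (hs : 0 ≤ s) : (1:ℝ)/2 ≤ gF κ s := by
  set m := min s (R1 κ) with hm
  have hm0 : 0 ≤ m := le_min hs hR1.le
  have hmR1 : m ≤ R1 κ := min_le_right _ _
  have hI0 : 0 ≤ ∫ u in (0:ℝ)..m, PhiF κ u / phiF κ u :=
    intervalIntegral.integral_nonneg hm0
      (fun u hu => div_nonneg (PhiF_nonneg hκcont hu.1) (phiF_pos κ u).le)
  have hIle : (∫ u in (0:ℝ)..m, PhiF κ u / phiF κ u)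
      ≤ ∫ u in (0:ℝ)..R1 κ, PhiF κ u / phiF κ u := by
    have hadd := intervalIntegral.integral_add_adjacent_intervals
      (q_intble hκcont le_rfl hm0) (q_intble hκcont hm0 hmR1)
    have htail : 0 ≤ ∫ u in m..R1 κ, PhiF κ u / phiF κ u :=
      intervalIntegral.integral_nonneg hmR1
        (fun u hu => div_nonneg (PhiF_nonneg hκcont (hm0.trans hu.1)) (phiF_pos κ u).le)
    linarith
  have hc := I_R1_pos hκcont hR1
  have : cF κ * ∫ u in (0:ℝ)..m, PhiF κ u / phiF κ u ≤ 1 := by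
    rw [cF]
    calc (∫ s in (0:ℝ)..R1 κ, PhiF κ s / phiF κ s)⁻¹ * ∫ u in (0:ℝ)..m, PhiF κ u / phiF κ u
        ≤ (∫ s in (0:ℝ)..R1 κ, PhiF κ s / phiF κ s)⁻¹
          * ∫ u in (0:ℝ)..R1 κ, PhiF κ u / phiF κ u :=
          mul_le_mul_of_nonneg_left hIle (inv_pos.mpr hc).le
      _ = 1 := inv_mul_cancel₀ hc.ne'
  rw [gF, ← hm]
  linarith

lemma fF_ge (hκcont : ContinuousOn κ (Set.Ici 0))
    (hκliminf : ∃ ε > (0:ℝ), ∃ R : ℝ, ∀ r ≥ R, ε ≤ κ r) (hR1 : 0 < R1 κ)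
    {r : ℝ} (hr : 0 ≤ r) : phiF κ (R0 κ) / 2 * r ≤ fF κ r := by
  have hgcont : ContinuousOn (gF κ) (Set.Icc 0 r) := by
    have hIcont : ContinuousOn (fun u => ∫ s in (0:ℝ)..u, PhiF κ s / phiF κ s)
        (Set.Icc 0 (R1 κ)) := by
      have := intervalIntegral.continuousOn_primitive_interval'
        (q_intble hκcont le_rfl hR1.le) (a := 0) left_mem_uIcc
      rwa [Set.uIcc_of_le hR1.le] at this
    have hmin : ContinuousOn (fun s => min s (R1 κ)) (Set.Icc 0 r) :=
      (continuous_id.min continuous_const).continuousOn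
    have hcomp : ContinuousOn
        (fun s => ∫ u in (0:ℝ)..min s (R1 κ), PhiF κ u / phiF κ u) (Set.Icc 0 r) :=
      hIcont.comp hmin (fun x hx => ⟨le_min hx.1 hR1.le, min_le_right _ _⟩)
    exact continuousOn_const.sub (continuousOn_const.mul hcomp)
  have hfg_int : IntervalIntegrable (fun s => phiF κ s * gF κ s) volume 0 r := by
    have := (phiF_contOn hκcont hr).mul hgcont
    rw [← Set.uIcc_of_le hr] at this
    exact this.intervalIntegrable
  have hconst : IntervalIntegrable (fun _ : ℝ => phiF κ (R0 κ) / 2) volume 0 r :=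
    intervalIntegrable_const
  have hmono := intervalIntegral.integral_mono_on hr hconst hfg_int
    (fun x hx => by
      have h1 := phiF_ge_R0 hκcont hκliminf hx.1
      have h2 := gF_ge_half hκcont hR1 hx.1
      have h3 := phiF_pos κ x
      nlinarith [phiF_pos κ (R0 κ)])
  rw [intervalIntegral.integral_const, smul_eq_mul, sub_zero] at hmono
  rw [fF]
  linarith

end helpers

/-- if `∇W` is `L`-Lipschitz then `‖∇W(x) − ∇W(y)‖ ≤ (2L/φ(R₀)) f(‖x − y‖)`;
in particular, if `2L/φ(R₀) < c` then `W` satisfies the interaction assumption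
`‖∇W(x) − ∇W(y)‖ ≤ η f(‖x − y‖)` for some `η ∈ (0, c)`. -/
theorem stmt9 {d : ℕ} (κ : ℝ → ℝ) (hκcont : ContinuousOn κ (Set.Ici 0))
    (hκliminf : ∃ ε > (0 : ℝ), ∃ R : ℝ, ∀ r ≥ R, ε ≤ κ r) (hR1 : 0 < R1 κ)
    (W : EuclideanSpace ℝ (Fin d) → ℝ) (hW : Differentiable ℝ W)
    (L : ℝ) (hL : 0 ≤ L)
    (hLip : ∀ x y : EuclideanSpace ℝ (Fin d), ‖gradient W x - gradient W y‖ ≤ L * ‖x - y‖) :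
    (∀ x y : EuclideanSpace ℝ (Fin d),
      ‖gradient W x - gradient W y‖ ≤ 2 * L / phiF κ (R0 κ) * fF κ ‖x - y‖) ∧
    (2 * L / phiF κ (R0 κ) < cF κ →
      ∃ η : ℝ, 0 < η ∧ η < cF κ ∧ ∀ x y : EuclideanSpace ℝ (Fin d),
        ‖gradient W x - gradient W y‖ ≤ η * fF κ ‖x - y‖) := by
  have hφ0 : 0 < phiF κ (R0 κ) := phiF_pos κ _
  have main : ∀ x y : EuclideanSpace ℝ (Fin d),
      ‖gradient W x - gradient W y‖ ≤ 2 * L / phiF κ (R0 κ) * fF κ ‖x - y‖ := by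
    intro x y
    have hr : (0:ℝ) ≤ ‖x - y‖ := norm_nonneg _
    have hf := fF_ge hκcont hκliminf hR1 hr
    have hcoef : 0 ≤ 2 * L / phiF κ (R0 κ) := by positivity
    calc ‖gradient W x - gradient W y‖ ≤ L * ‖x - y‖ := hLip x y
      _ = 2 * L / phiF κ (R0 κ) * (phiF κ (R0 κ) / 2 * ‖x - y‖) := by
          field_simp
      _ ≤ 2 * L / phiF κ (R0 κ) * fF κ ‖x - y‖ :=
          mul_le_mul_of_nonneg_left hf hcoef
  refine ⟨main, fun hlt => ?_⟩
  have hc := cF_pos hκcont hR1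
  refine ⟨max (2 * L / phiF κ (R0 κ)) (cF κ / 2), lt_max_of_lt_right (by linarith),
    max_lt hlt (by linarith), fun x y => ?_⟩
  have hfnn : 0 ≤ fF κ ‖x - y‖ := by
    have := fF_ge hκcont hκliminf hR1 (norm_nonneg (x - y))
    nlinarith [norm_nonneg (x - y)]
  exact (main x y).trans (mul_le_mul_of_nonneg_right (le_max_left _ _) hfnn)
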